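/- arXiv:2006.07117 — 2 statements merged into one kernel-verified Lean document; each statement's English description precedes it below -/
import Mathlib

section
/- Let T be a doubly block Toeplitz matrix of size rn² × sn² built from finitely many nonzero blocks T_{k,l} ∈ ℂ^{r×s} (nonzero only for -h₁ ≤ k ≤ h₂ and -w₁ ≤ l ≤ w₂), and let C be its doubly block circulant 'wrap-around' counterpart. Then the squared Frobenius norm of C − T is at most a n + b for constants a, b depending only on the blocks T_{k,l} and the filter dimensions, not on n. In particular, lim_{n→∞} ‖T − C‖_F² / n² = 0. -/
/-!
Writing `C - T` as the sum of the eight copies of `T` shifted by `n m`, `m ∈ {-1, 0, 1}² \ {0}`,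
Cauchy–Schwarz gives `‖C - T‖_F² ≤ 8 ∑ₘ ‖shifted copy‖_F²`. In a copy, the block `T_{k,l}` sits at
the positions with `i₁ - j₁ + n m₁ = k` and `i₂ - j₂ + n m₂ = l`. Along a coordinate with `mᵢ = 0`
there are at most `n` such index pairs, but along one with `mᵢ ≠ 0` only pairs near a corner of
`[0, n)²` qualify, at most `h₁ + h₂` (resp. `w₁ + w₂`) of them. As `m ≠ 0`, each block occurs
`O(n)` times, so `‖C - T‖_F² = O(n)`.
-/

open Matrix Filter

noncomputable def frobSq {α β : Type*} [Fintype α] [Fintype β] (M : Matrix α β ℂ) : ℝ :=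
  ∑ i, ∑ j, ‖M i j‖ ^ 2

open Finset

section Frobenius

attribute [local instance] Matrix.frobeniusNormedAddCommGroup

variable {α β : Type*} [Fintype α] [Fintype β]

lemma frobSq_nonneg (M : Matrix α β ℂ) : 0 ≤ frobSq M := by
  unfold frobSq
  positivity

lemma frobSq_eq_norm_sq (M : Matrix α β ℂ) : frobSq M = ‖M‖ ^ 2 := by
  rw [frobenius_norm_def, ← Real.rpow_natCast, ← Real.rpow_mul (by positivity)]
  norm_num [frobSq]

lemma frobSq_sub_comm (M N : Matrix α β ℂ) : frobSq (M - N) = frobSq (N - M) := by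
  rw [frobSq_eq_norm_sq, frobSq_eq_norm_sq, norm_sub_rev]

lemma frobSq_sum_le {ι : Type*} (s : Finset ι) (M : ι → Matrix α β ℂ) :
    frobSq (∑ i ∈ s, M i) ≤ #s * ∑ i ∈ s, frobSq (M i) := by
  simp only [frobSq_eq_norm_sq]
  calc ‖∑ i ∈ s, M i‖ ^ 2 ≤ (∑ i ∈ s, ‖M i‖) ^ 2 := by gcongr; exact norm_sum_le s M
    _ ≤ #s * ∑ i ∈ s, ‖M i‖ ^ 2 := sq_sum_le_card_mul_sum_sq

end Frobenius

lemma sum_comp_le_sum_of_injective {ι : Type*} [Fintype ι] {f : ℤ → ℝ} (hf : ∀ k, 0 ≤ f k)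
    {t : Finset ℤ} (hsupp : ∀ k ∉ t, f k = 0) {g : ι → ℤ} (hg : Function.Injective g) :
    ∑ x, f (g x) ≤ ∑ k ∈ t, f k := by
  classical
  calc ∑ x, f (g x) = ∑ k ∈ univ.map ⟨g, hg⟩, f k := by rw [sum_map]; rfl
    _ = ∑ k ∈ univ.map ⟨g, hg⟩ with k ∈ t, f k :=
      (sum_filter_of_ne fun k _ hk => by_contra fun hkt => hk (hsupp k hkt)).symm
    _ ≤ ∑ k ∈ t, f k :=
      sum_le_sum_of_subset_of_nonneg (fun k hk => (mem_filter.1 hk).2) fun k _ _ => hf k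

lemma sum_le_min_mul_of_eq_zero {n : ℕ} {G : Fin n → ℝ} {F : ℝ} (c : ℕ) (hG : ∀ x, G x ≤ F)
    (hG0 : ∀ x : Fin n, c ≤ (x : ℕ) → G x = 0) : ∑ x, G x ≤ min n c * F := by
  rw [← sum_filter_of_ne (p := fun x : Fin n => (x : ℕ) < c)
    fun x _ hx => by_contra fun hxc => hx (hG0 x (not_lt.1 hxc))]
  have := sum_le_card_nsmul _ _ F fun x (_ : x ∈ ({x : Fin n | (x : ℕ) < c} : Finset _)) => hG x
  rwa [Fin.card_filter_val_lt, nsmul_eq_mul] at this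

/-- An upper bound for the number of pairs `(i, j) ∈ [0, n)²` with `i - j + n m = k`, uniform in
`k ∈ [-a, b]`. -/
def wrapCount (n a b : ℕ) (m : ℤ) : ℕ := if m = 0 then n else min n (a + b)

lemma wrapCount_le (n a b : ℕ) (m : ℤ) : wrapCount n a b m ≤ n := by
  unfold wrapCount; split_ifs <;> omega

lemma wrapCount_le_of_ne_zero (n a b : ℕ) {m : ℤ} (hm : m ≠ 0) : wrapCount n a b m ≤ a + b := by
  simp [wrapCount, hm]

lemma sum_sub_add_le_wrapCount_mul {f : ℤ → ℝ} (hf : ∀ k, 0 ≤ f k) {a b : ℕ}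
    (hsupp : ∀ k ∉ Icc (-(a : ℤ)) b, f k = 0) (n : ℕ) (m : ℤ) :
    ∑ i : Fin n, ∑ j : Fin n, f (i - j + n * m) ≤
      wrapCount n a b m * ∑ k ∈ Icc (-(a : ℤ)) b, f k := by
  set F := ∑ k ∈ Icc (-(a : ℤ)) b, f k
  have hF : 0 ≤ F := sum_nonneg fun k _ => hf k
  have hrow (i : Fin n) : ∑ j : Fin n, f (i - j + n * m) ≤ F :=
    sum_comp_le_sum_of_injective hf hsupp fun j j' h =>
      Fin.ext (by exact_mod_cast sub_right_injective (add_right_cancel h))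
  have hcol (j : Fin n) : ∑ i : Fin n, f (i - j + n * m) ≤ F :=
    sum_comp_le_sum_of_injective hf hsupp fun i i' h =>
      Fin.ext (by exact_mod_cast sub_left_injective (add_right_cancel h))
  rcases lt_trichotomy m 0 with hneg | rfl | hpos
  · have hnm : (n : ℤ) * m ≤ -n := by nlinarith
    rw [sum_comm]
    refine (sum_le_min_mul_of_eq_zero a hcol fun j hj => sum_eq_zero fun i _ => hsupp _ ?_).trans ?_
    · have := i.isLt
      simp only [mem_Icc]
      omega
    · gcongr
      simp [wrapCount, hneg.ne]
  · simpa [wrapCount] using sum_le_card_nsmul univ _ F fun i _ => hrow i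
  · have hnm : (n : ℤ) ≤ n * m := by nlinarith
    refine (sum_le_min_mul_of_eq_zero b hrow fun i hi => sum_eq_zero fun j _ => hsupp _ ?_).trans ?_
    · have := j.isLt
      simp only [mem_Icc]
      omega
    · gcongr
      simp [wrapCount, hpos.ne']

lemma sum_sub_add_sub_add_le_wrapCount_mul {S : ℤ → ℤ → ℝ} (hS : ∀ k l, 0 ≤ S k l)
    {h₁ h₂ w₁ w₂ : ℕ}
    (hsupp : ∀ k l, k ∉ Icc (-(h₁ : ℤ)) h₂ ∨ l ∉ Icc (-(w₁ : ℤ)) w₂ → S k l = 0)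
    (n : ℕ) (m : ℤ × ℤ) :
    ∑ i₁ : Fin n, ∑ j₁ : Fin n, ∑ i₂ : Fin n, ∑ j₂ : Fin n,
        S (i₁ - j₁ + n * m.1) (i₂ - j₂ + n * m.2) ≤
      wrapCount n h₁ h₂ m.1 * wrapCount n w₁ w₂ m.2 *
        ∑ k ∈ Icc (-(h₁ : ℤ)) h₂, ∑ l ∈ Icc (-(w₁ : ℤ)) w₂, S k l := by
  calc _ ≤ wrapCount n h₁ h₂ m.1 *
        ∑ k ∈ Icc (-(h₁ : ℤ)) h₂, ∑ i₂ : Fin n, ∑ j₂ : Fin n, S k (i₂ - j₂ + n * m.2) :=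
        sum_sub_add_le_wrapCount_mul (fun k => sum_nonneg fun _ _ => sum_nonneg fun _ _ => hS _ _)
          (fun k hk => sum_eq_zero fun _ _ => sum_eq_zero fun _ _ => hsupp _ _ (.inl hk)) n m.1
    _ ≤ wrapCount n h₁ h₂ m.1 *
        ∑ k ∈ Icc (-(h₁ : ℤ)) h₂, wrapCount n w₁ w₂ m.2 * ∑ l ∈ Icc (-(w₁ : ℤ)) w₂, S k l := by
        gcongr with k
        exact sum_sub_add_le_wrapCount_mul (hS k) (fun l hl => hsupp k l (.inr hl)) n m.2
    _ = _ := by rw [← mul_sum, mul_assoc]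

lemma wrapCount_mul_wrapCount_le (n h₁ h₂ w₁ w₂ : ℕ) {m : ℤ × ℤ} (hm : m ≠ 0) :
    wrapCount n h₁ h₂ m.1 * wrapCount n w₁ w₂ m.2 ≤ (h₁ + h₂ + (w₁ + w₂)) * n := by
  by_cases hm₁ : m.1 = 0
  · have hm₂ : m.2 ≠ 0 := fun hm₂ => hm (Prod.ext hm₁ hm₂)
    calc _ ≤ n * (w₁ + w₂) :=
          Nat.mul_le_mul (wrapCount_le _ _ _ _) (wrapCount_le_of_ne_zero _ _ _ hm₂)
      _ ≤ _ := by nlinarith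
  · calc _ ≤ (h₁ + h₂) * n :=
          Nat.mul_le_mul (wrapCount_le_of_ne_zero _ _ _ hm₁) (wrapCount_le _ _ _ _)
      _ ≤ _ := by nlinarith

section BlockShift

variable {r s : ℕ}

/-- `C n` is the sum of `blockShift Tb n m` over `m ∈ {-1, 0, 1}²`, and `T n` is its term
`m = 0`. -/
def blockShift (Tb : ℤ → ℤ → Matrix (Fin r) (Fin s) ℂ) (n : ℕ) (m : ℤ × ℤ) :
    Matrix ((Fin n × Fin n) × Fin r) ((Fin n × Fin n) × Fin s) ℂ :=
  fun ipc jqd => Tb ((ipc.1.1 : ℤ) - (jqd.1.1 : ℤ) + n * m.1)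
    ((ipc.1.2 : ℤ) - (jqd.1.2 : ℤ) + n * m.2) ipc.2 jqd.2

lemma frobSq_blockShift (Tb : ℤ → ℤ → Matrix (Fin r) (Fin s) ℂ) (n : ℕ) (m : ℤ × ℤ) :
    frobSq (blockShift Tb n m) = ∑ i₁ : Fin n, ∑ j₁ : Fin n, ∑ i₂ : Fin n, ∑ j₂ : Fin n,
      frobSq (Tb (i₁ - j₁ + n * m.1) (i₂ - j₂ + n * m.2)) := by
  simp only [frobSq, blockShift, Fintype.sum_prod_type]
  refine sum_congr rfl fun i₁ _ => ?_
  rw [sum_congr rfl fun i₂ _ => sum_comm, sum_comm]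
  exact sum_congr rfl fun j₁ _ => sum_congr rfl fun i₂ _ => sum_comm

lemma frobSq_sum_blockShift_le {h₁ h₂ w₁ w₂ : ℕ} {Tb : ℤ → ℤ → Matrix (Fin r) (Fin s) ℂ}
    (hband : ∀ k l : ℤ,
      (k < -(h₁ : ℤ) ∨ (h₂ : ℤ) < k ∨ l < -(w₁ : ℤ) ∨ (w₂ : ℤ) < l) → Tb k l = 0)
    (n : ℕ) {O : Finset (ℤ × ℤ)} (hO : 0 ∉ O) :
    frobSq (∑ m ∈ O, blockShift Tb n m) ≤
      #O ^ 2 * (h₁ + h₂ + (w₁ + w₂) : ℕ) *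
        (∑ k ∈ Icc (-(h₁ : ℤ)) h₂, ∑ l ∈ Icc (-(w₁ : ℤ)) w₂, frobSq (Tb k l)) * n := by
  set B := ∑ k ∈ Icc (-(h₁ : ℤ)) h₂, ∑ l ∈ Icc (-(w₁ : ℤ)) w₂, frobSq (Tb k l)
  have hB : 0 ≤ B := sum_nonneg fun _ _ => sum_nonneg fun _ _ => frobSq_nonneg _
  have hsupp (k l : ℤ) (h : k ∉ Icc (-(h₁ : ℤ)) h₂ ∨ l ∉ Icc (-(w₁ : ℤ)) w₂) :
      frobSq (Tb k l) = 0 := by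
    rw [hband k l (by simp only [mem_Icc] at h; omega)]
    simp [frobSq]
  calc _ ≤ #O * ∑ m ∈ O, frobSq (blockShift Tb n m) := frobSq_sum_le O _
    _ ≤ #O * ∑ _m ∈ O, ((h₁ + h₂ + (w₁ + w₂) : ℕ) * n * B) := by
        gcongr with m hm
        rw [frobSq_blockShift]
        refine (sum_sub_add_sub_add_le_wrapCount_mul (fun _ _ => frobSq_nonneg _) hsupp n m).trans
          ?_
        refine mul_le_mul_of_nonneg_right ?_ hB
        exact_mod_cast wrapCount_mul_wrapCount_le n h₁ h₂ w₁ w₂ (ne_of_mem_of_not_mem hm hO)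
    _ = _ := by rw [sum_const, nsmul_eq_mul]; ring

end BlockShift

/-- For a banded doubly block Toeplitz matrix `T` and its doubly block circulant
wrap-around counterpart `C`, `‖C − T‖_F² ≤ a n + b` for constants `a, b` independent of `n`;
in particular `‖T − C‖_F²/n² → 0`. -/
theorem stmt6 (r s h₁ h₂ w₁ w₂ : ℕ) (Tb : ℤ → ℤ → Matrix (Fin r) (Fin s) ℂ)
    (hband : ∀ k l : ℤ,
      (k < -(h₁ : ℤ) ∨ (h₂ : ℤ) < k ∨ l < -(w₁ : ℤ) ∨ (w₂ : ℤ) < l) → Tb k l = 0) :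
    let T : (n : ℕ) → Matrix ((Fin n × Fin n) × Fin r) ((Fin n × Fin n) × Fin s) ℂ :=
      fun n ipc jqd =>
        Tb (((ipc.1.1 : ℕ) : ℤ) - ((jqd.1.1 : ℕ) : ℤ))
          (((ipc.1.2 : ℕ) : ℤ) - ((jqd.1.2 : ℕ) : ℤ)) ipc.2 jqd.2
    let C : (n : ℕ) → Matrix ((Fin n × Fin n) × Fin r) ((Fin n × Fin n) × Fin s) ℂ :=
      fun n ipc jqd =>
        ∑ m₁ ∈ Finset.Icc (-1 : ℤ) 1, ∑ m₂ ∈ Finset.Icc (-1 : ℤ) 1,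
          Tb (((ipc.1.1 : ℕ) : ℤ) - ((jqd.1.1 : ℕ) : ℤ) + (n : ℤ) * m₁)
            (((ipc.1.2 : ℕ) : ℤ) - ((jqd.1.2 : ℕ) : ℤ) + (n : ℤ) * m₂) ipc.2 jqd.2
    ∃ a b : ℝ, (∀ n : ℕ, frobSq (C n - T n) ≤ a * n + b) ∧
      Tendsto (fun n : ℕ => frobSq (T n - C n) / (n : ℝ) ^ 2) atTop (nhds 0) := by
  intro T C
  set O := (Icc (-1 : ℤ) 1 ×ˢ Icc (-1 : ℤ) 1).erase 0
  have hCT (n : ℕ) : C n - T n = ∑ m ∈ O, blockShift Tb n m := by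
    rw [sum_erase_eq_sub (by simp)]
    congr 1
    · ext ⟨⟨i₁, i₂⟩, c⟩ ⟨⟨j₁, j₂⟩, d⟩
      simp [C, blockShift, Matrix.sum_apply, sum_product]
    · ext ⟨⟨i₁, i₂⟩, c⟩ ⟨⟨j₁, j₂⟩, d⟩
      simp [T, blockShift]
  obtain ⟨a, ha⟩ : ∃ a : ℝ, ∀ n : ℕ, frobSq (C n - T n) ≤ a * n :=
    ⟨_, fun n => hCT n ▸ frobSq_sum_blockShift_le hband n (notMem_erase 0 _)⟩
  refine ⟨a, 0, fun n => by simpa using ha n, ?_⟩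
  refine squeeze_zero (fun n => div_nonneg (frobSq_nonneg _) (by positivity))
    (g := fun n : ℕ => a / n) (fun n => ?_)
    (tendsto_const_div_atTop_nhds_zero_nat a)
  rcases Nat.eq_zero_or_pos n with rfl | hn
  · simp
  · rw [frobSq_sub_comm, div_le_div_iff₀ (by positivity) (by positivity)]
    nlinarith [ha n]
end

section
/- Let T be a banded block Toeplitz matrix of size rn × sn generated by a matrix trigonometric polynomial F(ω) = Σ_{k=-h₁}^{h₂} T_k e^{ikω}. Then the spectral norm of T is at most the supremum over ω ∈ [-π,π] of the spectral norm of F(ω): ‖T‖₂ ≤ max_ω ‖F(ω)‖₂. -/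
/-!
Split `x ∈ ℂ^{ns}` into blocks `v₀, …, v_{n-1}` and put `v̂(ω) = ∑ⱼ e^{ijω} vⱼ`. Since the blocks
`T_k` vanish off a finite set, `F(ω) v̂(ω) = ∑ₗ e^{ilω} c_l` with `c_l = ∑ⱼ T_{l-j} vⱼ`, and the
block rows of `T x` are `c₀, …, c_{n-1}`. Parseval's identity on `[-π, π]` then gives
`2π ‖T x‖² ≤ 2π ∑ₗ ‖c_l‖² = ∫ ‖F v̂‖² ≤ (sup ‖F‖)² ∫ ‖v̂‖² = 2π (sup ‖F‖)² ‖x‖²`.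
The spectral norm, defined through the eigenvalues of `Mᴴ M`, is the `ℓ²` operator norm by the
spectral theorem and the C⋆-identity `‖Mᴴ M‖ = ‖M‖²`.
-/

open Matrix

/-- The multiset of singular values of a complex matrix `M`. -/
noncomputable def singularValues {m n : Type*} [Fintype m] [Fintype n] [DecidableEq n]
    (M : Matrix m n ℂ) : Multiset ℝ :=
  (Finset.univ.val).map fun i =>
    Real.sqrt ((Matrix.isHermitian_conjTranspose_mul_self M).eigenvalues i)

/-- The `j`-th largest singular value of `M` (0-indexed). -/
noncomputable def svDesc {m n : Type*} [Fintype m] [Fintype n] [DecidableEq n]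
    (M : Matrix m n ℂ) (j : ℕ) : ℝ :=
  (((singularValues M).sort (· ≤ ·)).reverse).getD j 0

/-- The spectral norm (largest singular value) of a matrix. -/
noncomputable def specNorm {m n : Type*} [Fintype m] [Fintype n] [DecidableEq n]
    (M : Matrix m n ℂ) : ℝ :=
  svDesc M 0

open Complex Real WithLp
open scoped Matrix.Norms.L2Operator

section SpecNorm

variable {m n : Type*} [Fintype m] [Fintype n] [DecidableEq n] (M : Matrix m n ℂ)

lemma specNorm_eq_zero_or_mem : specNorm M = 0 ∨ specNorm M ∈ singularValues M := by
  unfold specNorm svDesc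
  rcases hl : ((singularValues M).sort (· ≤ ·)).reverse with _ | ⟨a, t⟩
  · exact Or.inl rfl
  · right
    rw [← Multiset.mem_sort (· ≤ ·), ← List.mem_reverse, hl]
    exact List.mem_cons_self

lemma le_specNorm {x : ℝ} (hx : x ∈ singularValues M) : x ≤ specNorm M := by
  unfold specNorm svDesc
  have hs := List.pairwise_reverse.mpr (Multiset.pairwise_sort (singularValues M) (· ≤ ·))
  have hmem : x ∈ ((singularValues M).sort (· ≤ ·)).reverse := by
    rwa [List.mem_reverse, Multiset.mem_sort]
  rcases hl : ((singularValues M).sort (· ≤ ·)).reverse with _ | ⟨a, t⟩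
  · simp [hl] at hmem
  · rw [hl] at hmem hs
    rcases List.mem_cons.mp hmem with rfl | hxt
    · exact le_rfl
    · exact (List.pairwise_cons.mp hs).1 x hxt

lemma sqrt_eigenvalue_le_specNorm (i : n) :
    √((isHermitian_conjTranspose_mul_self M).eigenvalues i) ≤ specNorm M :=
  le_specNorm M (Multiset.mem_map_of_mem _ (Finset.mem_univ i))

lemma specNorm_nonneg : 0 ≤ specNorm M := by
  rcases specNorm_eq_zero_or_mem M with h | h
  · exact h.ge
  · obtain ⟨i, -, hi⟩ := Multiset.mem_map.mp h
    exact hi ▸ Real.sqrt_nonneg _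

lemma specNorm_le {c : ℝ} (hc : 0 ≤ c)
    (h : ∀ i, √((isHermitian_conjTranspose_mul_self M).eigenvalues i) ≤ c) :
    specNorm M ≤ c := by
  rcases specNorm_eq_zero_or_mem M with h0 | hmem
  · exact h0 ▸ hc
  · obtain ⟨i, -, hi⟩ := Multiset.mem_map.mp hmem
    exact hi ▸ h i

end SpecNorm

lemma Matrix.IsHermitian.l2_opNorm_eq {n : Type*} [Fintype n] [DecidableEq n]
    {A : Matrix n n ℂ} (hA : A.IsHermitian) : ‖A‖ = ‖hA.eigenvalues‖ := by
  conv_lhs => rw [hA.spectral_theorem]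
  rw [Unitary.conjStarAlgAut_apply, ← Unitary.coe_star, CStarRing.norm_mul_coe_unitary,
    CStarRing.norm_coe_unitary_mul, l2_opNorm_diagonal]
  simp [Pi.norm_def]

theorem specNorm_eq_l2_opNorm {m n : Type*} [Fintype m] [Fintype n] [DecidableEq n]
    (M : Matrix m n ℂ) : specNorm M = ‖M‖ := by
  set hA := isHermitian_conjTranspose_mul_self M
  have hnorm : ‖M‖ * ‖M‖ = ‖hA.eigenvalues‖ := by
    rw [← l2_opNorm_conjTranspose_mul_self, hA.l2_opNorm_eq]
  have hsqrt (i : n) : √(hA.eigenvalues i) * √(hA.eigenvalues i) = ‖hA.eigenvalues i‖ := by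
    rw [Real.mul_self_sqrt (eigenvalues_conjTranspose_mul_self_nonneg M i),
      Real.norm_of_nonneg (eigenvalues_conjTranspose_mul_self_nonneg M i)]
  refine le_antisymm (specNorm_le M (norm_nonneg M) fun i => ?_) ?_
  · rw [mul_self_le_mul_self_iff (Real.sqrt_nonneg _) (norm_nonneg M), hsqrt, hnorm]
    exact norm_le_pi_norm hA.eigenvalues i
  · rw [mul_self_le_mul_self_iff (norm_nonneg M) (specNorm_nonneg M), hnorm]
    refine (pi_norm_le_iff_of_nonneg (mul_self_nonneg _)).mpr fun i => ?_
    rw [← hsqrt]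
    exact mul_self_le_mul_self (Real.sqrt_nonneg _) (sqrt_eigenvalue_le_specNorm M i)

section L2OpNorm

variable {𝕜 : Type*} [RCLike 𝕜] {m n : Type*} [Fintype m] [Fintype n] [DecidableEq n]

lemma Matrix.norm_toEuclideanLin_apply_le (A : Matrix m n 𝕜) (x : EuclideanSpace 𝕜 n) :
    ‖toEuclideanLin A x‖ ≤ ‖A‖ * ‖x‖ :=
  ((toEuclideanLin.trans LinearMap.toContinuousLinearMap) A).le_opNorm x

lemma Matrix.l2_opNorm_le_of_forall {A : Matrix m n 𝕜} {c : ℝ} (hc : 0 ≤ c)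
    (h : ∀ x, ‖toEuclideanLin A x‖ ≤ c * ‖x‖) : ‖A‖ ≤ c :=
  ContinuousLinearMap.opNorm_le_bound _ hc h

end L2OpNorm

lemma EuclideanSpace.norm_sq_eq_sum_norm_sq_curry {𝕜 : Type*} [RCLike 𝕜] {m n : Type*}
    [Fintype m] [Fintype n] (x : EuclideanSpace 𝕜 (m × n)) :
    ‖x‖ ^ 2 = ∑ i, ‖(toLp 2 fun j => x (i, j) : EuclideanSpace 𝕜 n)‖ ^ 2 := by
  simp [EuclideanSpace.norm_sq_eq, Fintype.sum_prod_type]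

lemma Finset.sum_eq_sum_sub_of_support_subset {M : Type*} [AddCommMonoid M] {K S : Finset ℤ}
    {f : ℤ → M} (hf : ∀ k ∉ K, f k = 0) {j : ℤ} (hKS : ∀ k ∈ K, k + j ∈ S) :
    ∑ k ∈ K, f k = ∑ l ∈ S, f (l - j) := by
  calc ∑ k ∈ K, f k = ∑ l ∈ K.map (addRightEmbedding j), f (l - j) := by simp
    _ = ∑ l ∈ S, f (l - j) := by
      refine Finset.sum_subset (fun l hl => ?_) fun l _ hl => hf _ fun hK => hl ?_
      · obtain ⟨k, hk, rfl⟩ := Finset.mem_map.mp hl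
        exact hKS k hk
      · exact Finset.mem_map.mpr ⟨l - j, hK, by simp⟩

lemma exp_I_mul_int_add (j k : ℤ) (ω : ℝ) :
    cexp (I * (((j + k : ℤ) : ℝ) * ω : ℝ)) =
      cexp (I * ((j : ℝ) * ω : ℝ)) * cexp (I * ((k : ℝ) * ω : ℝ)) := by
  rw [← Complex.exp_add]
  congr 1
  push_cast
  ring

lemma conj_exp_I_mul_int (k : ℤ) (ω : ℝ) :
    starRingEnd ℂ (cexp (I * ((k : ℝ) * ω : ℝ))) = cexp (I * (((-k : ℤ) : ℝ) * ω : ℝ)) := by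
  rw [← Complex.exp_conj]
  simp

theorem integral_exp_I_mul_int (k : ℤ) :
    ∫ ω in (-π)..π, cexp (I * ((k : ℝ) * ω : ℝ)) = if k = 0 then ((2 * π : ℝ) : ℂ) else 0 := by
  split_ifs with hk
  · subst hk
    simp [two_mul]
  · have hc : I * k ≠ 0 := mul_ne_zero I_ne_zero (Int.cast_ne_zero.mpr hk)
    have hperiod : cexp (I * k * π) = cexp (I * k * (-π : ℝ)) := by
      rw [show I * k * π = I * k * (-π : ℝ) + k * (2 * π * I) by push_cast; ring,
        Complex.exp_add, Complex.exp_int_mul_two_pi_mul_I, mul_one]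
    simp_rw [show ∀ ω : ℝ, I * ((k * ω : ℝ) : ℂ) = I * k * ω from fun ω => by push_cast; ring]
    rw [integral_exp_mul_complex hc, hperiod, sub_self, zero_div]

lemma norm_sq_sum_exp_smul {E : Type*} [NormedAddCommGroup E] [InnerProductSpace ℂ E]
    {ι : Type*} (s : Finset ι) (e : ι → ℤ) (a : ι → E) (ω : ℝ) :
    ((‖∑ i ∈ s, cexp (I * ((e i : ℝ) * ω : ℝ)) • a i‖ ^ 2 : ℝ) : ℂ) =
      ∑ i ∈ s, ∑ j ∈ s, cexp (I * (((e j - e i : ℤ) : ℝ) * ω : ℝ)) * inner ℂ (a i) (a j) := by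
  rw [ofReal_pow, show ((‖_‖ : ℝ) : ℂ) ^ 2 = _ from (inner_self_eq_norm_sq_to_K _).symm,
    sum_inner]
  refine Finset.sum_congr rfl fun i _ => ?_
  rw [inner_sum]
  refine Finset.sum_congr rfl fun j _ => ?_
  rw [inner_smul_left, inner_smul_right, conj_exp_I_mul_int, sub_eq_add_neg, exp_I_mul_int_add]
  ring

theorem integral_norm_sq_sum_exp_smul {E : Type*} [NormedAddCommGroup E]
    [InnerProductSpace ℂ E] {ι : Type*} {s : Finset ι} {e : ι → ℤ} (he : Set.InjOn e s)
    (a : ι → E) :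
    ∫ ω in (-π)..π, ‖∑ i ∈ s, cexp (I * ((e i : ℝ) * ω : ℝ)) • a i‖ ^ 2 =
      2 * π * ∑ i ∈ s, ‖a i‖ ^ 2 := by
  apply Complex.ofReal_injective
  rw [← intervalIntegral.integral_ofReal]
  simp_rw [norm_sq_sum_exp_smul]
  rw [intervalIntegral.integral_finsetSum fun i _ =>
      Continuous.intervalIntegrable (by fun_prop) _ _, ofReal_mul, ofReal_sum, Finset.mul_sum]
  refine Finset.sum_congr rfl fun i hi => ?_
  -- orthogonality: only `j = i` survives, as `e` is injective on `s`
  rw [intervalIntegral.integral_finsetSum fun j _ =>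
      Continuous.intervalIntegrable (by fun_prop) _ _,
    Finset.sum_eq_single_of_mem i hi fun j hj hji => ?_]
  · rw [sub_self, intervalIntegral.integral_mul_const, integral_exp_I_mul_int, if_pos rfl,
      inner_self_eq_norm_sq_to_K]
    push_cast
    rfl
  · rw [intervalIntegral.integral_mul_const, integral_exp_I_mul_int,
      if_neg (sub_ne_zero.mpr fun h => hji (he hj hi h)), zero_mul]

theorem sum_norm_sq_le_of_norm_sum_exp_smul_le {E F : Type*} [NormedAddCommGroup E]
    [InnerProductSpace ℂ E] [NormedAddCommGroup F] [InnerProductSpace ℂ F] {ι κ : Type*}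
    {s : Finset ι} {t : Finset κ} {e : ι → ℤ} {f : κ → ℤ} (he : Set.InjOn e s)
    (hf : Set.InjOn f t) (a : ι → E) (b : κ → F) {M : ℝ}
    (h : ∀ ω ∈ Set.Icc (-π) π, ‖∑ k ∈ t, cexp (I * ((f k : ℝ) * ω : ℝ)) • b k‖ ≤
      M * ‖∑ i ∈ s, cexp (I * ((e i : ℝ) * ω : ℝ)) • a i‖) :
    ∑ k ∈ t, ‖b k‖ ^ 2 ≤ M ^ 2 * ∑ i ∈ s, ‖a i‖ ^ 2 := by
  have hint : 2 * π * ∑ k ∈ t, ‖b k‖ ^ 2 ≤ 2 * π * (M ^ 2 * ∑ i ∈ s, ‖a i‖ ^ 2) := by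
    rw [← integral_norm_sq_sum_exp_smul hf, mul_left_comm, ← integral_norm_sq_sum_exp_smul he,
      ← intervalIntegral.integral_const_mul]
    refine intervalIntegral.integral_mono_on (by linarith [pi_pos])
      (Continuous.intervalIntegrable (by fun_prop) _ _)
      (Continuous.intervalIntegrable (by fun_prop) _ _) fun ω hω => ?_
    rw [← mul_pow]
    exact pow_le_pow_left₀ (norm_nonneg _) (h ω hω) 2
  exact le_of_mul_le_mul_left hint two_pi_pos

section BlockToeplitz

variable {m p : Type*}

noncomputable def blockToeplitz (Tb : ℤ → Matrix m p ℂ) (n : ℕ) :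
    Matrix (Fin n × m) (Fin n × p) ℂ :=
  fun ic jd => Tb (((ic.1 : ℕ) : ℤ) - ((jd.1 : ℕ) : ℤ)) ic.2 jd.2

noncomputable def toeplitzSymbol (K : Finset ℤ) (Tb : ℤ → Matrix m p ℂ) (ω : ℝ) : Matrix m p ℂ :=
  ∑ k ∈ K, cexp (I * ((k : ℝ) * ω : ℝ)) • Tb k

lemma l2_opNorm_toeplitzSymbol_le [Fintype m] [Fintype p] [DecidableEq p] (K : Finset ℤ)
    (Tb : ℤ → Matrix m p ℂ) (ω : ℝ) : ‖toeplitzSymbol K Tb ω‖ ≤ ∑ k ∈ K, ‖Tb k‖ :=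
  (norm_sum_le _ _).trans_eq <| Finset.sum_congr rfl fun k _ => by
    rw [norm_smul, norm_exp_I_mul_ofReal, one_mul]

lemma toEuclideanLin_toeplitzSymbol_sum_exp_smul [Fintype p] [DecidableEq p]
    {Tb : ℤ → Matrix m p ℂ} {K : Finset ℤ} (hK : ∀ k ∉ K, Tb k = 0) {n : ℕ} {S : Finset ℤ}
    (hS : ∀ k ∈ K, ∀ j : Fin n, k + j ∈ S) (v : Fin n → EuclideanSpace ℂ p) (ω : ℝ) :
    toEuclideanLin (toeplitzSymbol K Tb ω)
        (∑ j : Fin n, cexp (I * (((j : ℕ) : ℤ) * ω : ℝ)) • v j) =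
      ∑ l ∈ S, cexp (I * ((l : ℝ) * ω : ℝ)) • ∑ j : Fin n, toEuclideanLin (Tb (l - j)) (v j) := by
  have hshift (j : Fin n) : toEuclideanLin (toeplitzSymbol K Tb ω) (v j) =
      ∑ l ∈ S, cexp (I * (((l - j : ℤ) : ℝ) * ω : ℝ)) • toEuclideanLin (Tb (l - j)) (v j) := by
    simp only [toeplitzSymbol, map_sum, map_smul, LinearMap.sum_apply, LinearMap.smul_apply]
    exact Finset.sum_eq_sum_sub_of_support_subset (by simp +contextual [hK]) (hS · · j)
  simp only [map_sum, map_smul, hshift, Finset.smul_sum, smul_smul, ← exp_I_mul_int_add,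
    add_sub_cancel]
  exact Finset.sum_comm

lemma toEuclideanLin_blockToeplitz_apply [Fintype p] [DecidableEq p] (Tb : ℤ → Matrix m p ℂ)
    {n : ℕ} (x : EuclideanSpace ℂ (Fin n × p)) (i : Fin n) (c : m) :
    toEuclideanLin (blockToeplitz Tb n) x (i, c) =
      (∑ j : Fin n, toEuclideanLin (Tb ((i : ℕ) - (j : ℕ) : ℤ)) (toLp 2 fun d => x (j, d))) c := by
  simp [blockToeplitz, mulVec, dotProduct, Fintype.sum_prod_type]

theorem l2_opNorm_blockToeplitz_le [Fintype m] [Fintype p] [DecidableEq p]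
    {Tb : ℤ → Matrix m p ℂ} {K : Finset ℤ} (hK : ∀ k ∉ K, Tb k = 0) {M : ℝ}
    (hM : ∀ ω ∈ Set.Icc (-π) π, ‖toeplitzSymbol K Tb ω‖ ≤ M) (n : ℕ) :
    ‖blockToeplitz Tb n‖ ≤ M := by
  have hM0 : 0 ≤ M := (norm_nonneg _).trans (hM 0 ⟨by linarith [pi_pos], pi_pos.le⟩)
  refine l2_opNorm_le_of_forall hM0 fun x => ?_
  set v : Fin n → EuclideanSpace ℂ p := fun j => toLp 2 fun d => x (j, d)
  set c : ℤ → EuclideanSpace ℂ m := fun l => ∑ j : Fin n, toEuclideanLin (Tb (l - j)) (v j)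
  -- every frequency of `toeplitzSymbol K Tb ω *ᵥ v̂ ω`, and every block row index of `T x`
  set S : Finset ℤ := (K ×ˢ Finset.univ).image (fun kj : ℤ × Fin n => kj.1 + kj.2.val) ∪
    Finset.univ.image (fun j : Fin n => (j.val : ℤ))
  have hTx : ‖toEuclideanLin (blockToeplitz Tb n) x‖ ^ 2 = ∑ i : Fin n, ‖c i‖ ^ 2 := by
    rw [EuclideanSpace.norm_sq_eq_sum_norm_sq_curry]
    simp only [toEuclideanLin_blockToeplitz_apply]
    rfl
  have hcast : Set.InjOn (fun j : Fin n => (j.val : ℤ)) (Finset.univ : Finset (Fin n)) :=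
    fun i _ j _ hij => Fin.ext (Int.ofNat_inj.mp hij)
  have hparseval : ∑ l ∈ S, ‖c l‖ ^ 2 ≤ M ^ 2 * ∑ j, ‖v j‖ ^ 2 := by
    refine sum_norm_sq_le_of_norm_sum_exp_smul_le hcast (fun _ _ _ _ h => h) v c fun ω hω => ?_
    rw [← toEuclideanLin_toeplitzSymbol_sum_exp_smul hK (S := S)
      (fun k hk j => Finset.mem_union_left _ (Finset.mem_image.mpr
        ⟨(k, j), Finset.mem_product.mpr ⟨hk, Finset.mem_univ j⟩, rfl⟩)) v ω]
    exact (norm_toEuclideanLin_apply_le _ _).trans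
      (mul_le_mul_of_nonneg_right (hM ω hω) (norm_nonneg _))
  have hsub : ∑ i : Fin n, ‖c i‖ ^ 2 ≤ ∑ l ∈ S, ‖c l‖ ^ 2 := by
    rw [← Finset.sum_image (f := fun l => ‖c l‖ ^ 2) hcast]
    exact Finset.sum_le_sum_of_subset_of_nonneg Finset.subset_union_right
      fun _ _ _ => sq_nonneg _
  rw [← pow_le_pow_iff_left₀ (norm_nonneg _) (by positivity) two_ne_zero, mul_pow, hTx,
    EuclideanSpace.norm_sq_eq_sum_norm_sq_curry x]
  exact hsub.trans hparseval

end BlockToeplitz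

lemma Real.le_biSup_of_forall_le {α : Type*} {f : α → ℝ} {B : ℝ} (hB : ∀ x, f x ≤ B)
    {s : Set α} {x : α} (hx : x ∈ s) : f x ≤ ⨆ y ∈ s, f y :=
  le_ciSup₂ (f := fun y _ => f y) ⟨B, by rintro _ ⟨_, ⟨y, rfl⟩, ⟨_, rfl⟩⟩; exact hB y⟩ x hx

/-- For a banded block Toeplitz matrix `T` generated by the matrix trigonometric polynomial
`F(ω) = Σ_k T_k e^{ikω}`, the spectral norm of `T` is at most `max_ω ‖F(ω)‖₂`. -/
theorem stmt12 (r s h₁ h₂ : ℕ) (Tb : ℤ → Matrix (Fin r) (Fin s) ℂ)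
    (hband : ∀ k : ℤ, (k < -(h₁ : ℤ) ∨ (h₂ : ℤ) < k) → Tb k = 0) :
    let F : ℝ → Matrix (Fin r) (Fin s) ℂ := fun ω =>
      ∑ k ∈ Finset.Icc (-(h₁ : ℤ)) (h₂ : ℤ),
        Complex.exp (Complex.I * (((k : ℝ) * ω : ℝ) : ℂ)) • Tb k
    let T : (n : ℕ) → Matrix (Fin n × Fin r) (Fin n × Fin s) ℂ :=
      fun n ic jd => Tb (((ic.1 : ℕ) : ℤ) - ((jd.1 : ℕ) : ℤ)) ic.2 jd.2
    ∀ n : ℕ, specNorm (T n) ≤ ⨆ ω ∈ Set.Icc (-Real.pi) Real.pi, specNorm (F ω) := by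
  intro F T n
  have hK : ∀ k ∉ Finset.Icc (-(h₁ : ℤ)) h₂, Tb k = 0 := fun k hk =>
    hband k (by rw [Finset.mem_Icc] at hk; omega)
  have hF (ω : ℝ) : specNorm (F ω) = ‖toeplitzSymbol (Finset.Icc (-(h₁ : ℤ)) h₂) Tb ω‖ :=
    specNorm_eq_l2_opNorm _
  rw [specNorm_eq_l2_opNorm]
  refine l2_opNorm_blockToeplitz_le hK (fun ω hω => ?_) n
  rw [← hF]
  exact Real.le_biSup_of_forall_le
    (fun ω => (hF ω).trans_le (l2_opNorm_toeplitzSymbol_le _ _ ω)) hω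
end
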